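/- Suppose ρ is normalized Lipschitz and each filter coefficient t ↦ h_{fgk}^{(ℓ,t)} is continuous on [0,T], with h_T := sup_{t∈[0,T]} max_{f,g,k,ℓ} |h_{fgk}^{(ℓ,t)}|. Let W, Wₙ : I² → ℝ be measurable with |W| ≤ 1 and |Wₙ| ≤ 1, let Z, Zₙ ∈ L^∞(I;ℝ^F), and let X and Xₙ be the solutions on [0,T] of the Graphon-NDEs with data (W, Z) and (Wₙ, Zₙ) respectively and the same filters. Then sup_{t∈[0,T]} ‖Xₙ(t) − X(t)‖_{L²(I;ℝ^F)} ≤ P ‖Zₙ − Z‖_{L²(I;ℝ^F)} + Q ‖T_{Wₙ} − T_W‖_{L²(I)→L²(I)}, where P := exp(T (F K h_T)^L) and Q := (P − 1) L K · sup_{t∈[0,T]} ‖X(t)‖_{L²(I;ℝ^F)}. -/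

import Mathlib

open MeasureTheory Filter Set
open scoped ENNReal NNReal

noncomputable section

/-- Lebesgue measure restricted to the unit interval `I = [0,1]`. -/
def μI : Measure ℝ := volume.restrict (Set.Icc (0:ℝ) 1)

/-- Lebesgue measure restricted to the unit square `I² = [0,1]²`. -/
def μI2 : Measure (ℝ × ℝ) := volume.restrict ((Set.Icc (0:ℝ) 1) ×ˢ (Set.Icc (0:ℝ) 1))

/-- The graphon integral operator `(T_W x)(v) = ∫_I W(u,v) x(u) du`. -/
def graphonOp (W : ℝ → ℝ → ℝ) (x : ℝ → ℝ) : ℝ → ℝ :=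
  fun v => ∫ u in Set.Icc (0:ℝ) 1, W u v * x u

/-- `k`-fold composition `T_W^k` (identity for `k = 0`). -/
def graphonIter (W : ℝ → ℝ → ℝ) (k : ℕ) (x : ℝ → ℝ) : ℝ → ℝ :=
  (graphonOp W)^[k] x

/-- `ρ` is normalized Lipschitz: `|ρ x − ρ y| ≤ |x − y|` and `ρ 0 = 0`. -/
def NormalizedLipschitz (ρ : ℝ → ℝ) : Prop :=
  (∀ x y : ℝ, |ρ x - ρ y| ≤ |x - y|) ∧ ρ 0 = 0

/-- One layer of a graphon neural network. -/
def gnnLayer (F K : ℕ) (W : ℝ → ℝ → ℝ) (ρ : ℝ → ℝ)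
    (h : Fin F → Fin F → Fin K → ℝ) (X : Fin F → ℝ → ℝ) : Fin F → ℝ → ℝ :=
  fun f u => ρ (∑ g : Fin F, ∑ k : Fin K, h f g k * graphonIter W (k : ℕ) (X g) u)

/-- The `L`-layer graphon neural network `Φ(W; X; h)`. -/
def gnn (F K L : ℕ) (W : ℝ → ℝ → ℝ) (ρ : ℝ → ℝ)
    (h : Fin L → Fin F → Fin F → Fin K → ℝ) (X : Fin F → ℝ → ℝ) : Fin F → ℝ → ℝ :=
  (List.ofFn h).foldl (fun Y hl => gnnLayer F K W ρ hl Y) X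

/-- The mixed norm `‖X‖_{L^p(I;ℝ^F)} = (∑_f ‖X_f‖_{L^p(I)}²)^{1/2}`. -/
def vecLpNorm (F : ℕ) (p : ℝ≥0∞) (X : Fin F → ℝ → ℝ) : ℝ :=
  Real.sqrt (∑ f : Fin F, ((eLpNorm (X f) p μI).toReal) ^ 2)

/-- `X : ℝ → L^∞(I;ℝ^F)` is, on `[0,T]`, a continuously differentiable solution of the
Graphon-NDE `dX/dt(t) = Φ(W; X(t); H(t))`, `X(0) = Z`, in the Banach space `L^∞(I;ℝ^F)`. -/
def IsGNDESolution (F K L : ℕ) (T : ℝ) (W : ℝ → ℝ → ℝ) (ρ : ℝ → ℝ)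
    (H : ℝ → Fin L → Fin F → Fin F → Fin K → ℝ) (Z : Fin F → ℝ → ℝ)
    (X : ℝ → Fin F → Lp ℝ ⊤ μI) : Prop :=
  (∀ f, (X 0 f : ℝ → ℝ) =ᵐ[μI] Z f) ∧
  ∃ X' : ℝ → Fin F → Lp ℝ ⊤ μI,
    ContinuousOn X' (Set.Icc 0 T) ∧
    ∀ t ∈ Set.Icc (0:ℝ) T,
      HasDerivWithinAt X (X' t) (Set.Icc 0 T) t ∧
      ∀ f, (X' t f : ℝ → ℝ) =ᵐ[μI]
        gnn F K L W ρ (H t) (fun g => (X t g : ℝ → ℝ)) f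

/-- Operator norm (from `L²(I)` to `L²(I)`) of the difference `T_W − T_{W'}`. -/
def graphonOpNormSub (W W' : ℝ → ℝ → ℝ) : ℝ :=
  ⨆ x : {x : ℝ → ℝ // MemLp x 2 μI ∧ eLpNorm x 2 μI ≤ 1},
    (eLpNorm (fun v => graphonOp W x v - graphonOp W' x v) 2 μI).toReal

/-- Left endpoint `u_i = (i−1)/n` of the cell `I_i` containing `u`. -/
def stepPt (n : ℕ) (u : ℝ) : ℝ := (⌊(n : ℝ) * u⌋ : ℝ) / n

/-- Sampled step kernel: `Wₙ(u,v) = W(u_i,u_j)` for `(u,v) ∈ I_i × I_j`. -/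
def sampKernel (W : ℝ → ℝ → ℝ) (n : ℕ) : ℝ → ℝ → ℝ :=
  fun u v => W (stepPt n u) (stepPt n v)

/-- Sampled step datum: `Zₙ(u) = Z(u_i)` for `u ∈ I_i`. -/
def sampDatum (F : ℕ) (Z : Fin F → ℝ → ℝ) (n : ℕ) : Fin F → ℝ → ℝ :=
  fun f u => Z f (stepPt n u)

/-- Support `W⁺ = {(u,v) ∈ I² : W(u,v) = 1}`. -/
def supportSet (W : ℝ → ℝ → ℝ) : Set (ℝ × ℝ) :=
  {p : ℝ × ℝ | p.1 ∈ Set.Icc (0:ℝ) 1 ∧ p.2 ∈ Set.Icc (0:ℝ) 1 ∧ W p.1 p.2 = 1}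

/-- The cell `I_i = [u_i, u_i + 1/n)` containing `u`. -/
def cell (n : ℕ) (u : ℝ) : Set ℝ := Set.Ico (stepPt n u) (stepPt n u + 1 / n)

open scoped Classical in
/-- Cell-intersection step kernel: `Wₙ = 1` on `I_i × I_j` iff `(I_i × I_j) ∩ W⁺ ≠ ∅`. -/
def interKernel (W : ℝ → ℝ → ℝ) (n : ℕ) : ℝ → ℝ → ℝ :=
  fun u v => if ((cell n u ×ˢ cell n v) ∩ supportSet W).Nonempty then 1 else 0

/-- Cell-average step datum: `Zₙ(u) = n ∫_{I_i} Z(v) dv` for `u ∈ I_i`. -/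
def cellAvg (F : ℕ) (Z : Fin F → ℝ → ℝ) (n : ℕ) : Fin F → ℝ → ℝ :=
  fun f u => (n : ℝ) * ∫ v in cell n u, Z f v

/-- Number of closed `δ`-mesh squares `[iδ,(i+1)δ] × [jδ,(j+1)δ]`, `i,j ∈ ℤ`, meeting `Ω`. -/
def meshCount (δ : ℝ) (Ω : Set (ℝ × ℝ)) : ℕ :=
  Set.ncard {p : ℤ × ℤ |
    ((Set.Icc ((p.1 : ℝ) * δ) (((p.1 : ℝ) + 1) * δ) ×ˢ
      Set.Icc ((p.2 : ℝ) * δ) (((p.2 : ℝ) + 1) * δ)) ∩ Ω).Nonempty}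

/-- Upper box-counting dimension `limsup_{δ→0⁺} log N_δ(Ω) / (−log δ)`. -/
def upperBoxDim (Ω : Set (ℝ × ℝ)) : ℝ :=
  Filter.limsup (fun δ : ℝ => Real.log (meshCount δ Ω) / (-Real.log δ))
    (nhdsWithin 0 (Set.Ioi 0))

end

/-!
Write `e(t) = Xₙ(t) − X(t)`. The operator `T_W` is a contraction of `L²(I)` (since `|W| ≤ 1` and `I`
has unit measure), and by induction `‖T_{W₁}^k x − T_{W₂}^k y‖ ≤ ‖x − y‖ + k ‖T_{W₁} − T_{W₂}‖ ‖y‖`.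
Since `ρ` is `1`-Lipschitz, one layer with coefficients bounded by `h_T` multiplies the
`L²(I;ℝ^F)`-distance of its inputs by at most `F K h_T`, up to the kernel-perturbation term
`F K h_T · K ‖T_{Wₙ} − T_W‖ ‖input‖`; composing `L` layers gives
`‖e'(t)‖ ≤ A ‖e(t)‖ + A L K ‖T_{Wₙ} − T_W‖ sup_s ‖X(s)‖` with `A = (F K h_T)^L`,
and Grönwall's inequality concludes.
-/

section ToRealELpNorm

variable {α E : Type*} {m : MeasurableSpace α} {μ : Measure α} [NormedAddCommGroup E]
  {p : ℝ≥0∞}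

lemma toReal_eLpNorm_add_le [Fact (1 ≤ p)] {f g : α → E} (hf : MemLp f p μ) (hg : MemLp g p μ) :
    (eLpNorm (f + g) p μ).toReal ≤ (eLpNorm f p μ).toReal + (eLpNorm g p μ).toReal := by
  rw [← Lp.norm_toLp f hf, ← Lp.norm_toLp g hg, ← Lp.norm_toLp _ (hf.add hg), MemLp.toLp_add]
  exact norm_add_le _ _

lemma toReal_eLpNorm_sub_le [Fact (1 ≤ p)] {f g : α → E} (hf : MemLp f p μ) (hg : MemLp g p μ) :
    (eLpNorm (f - g) p μ).toReal ≤ (eLpNorm f p μ).toReal + (eLpNorm g p μ).toReal := by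
  rw [← Lp.norm_toLp f hf, ← Lp.norm_toLp g hg, ← Lp.norm_toLp _ (hf.sub hg), MemLp.toLp_sub]
  exact norm_sub_le _ _

lemma toReal_eLpNorm_const_smul [NormedSpace ℝ E] (c : ℝ) (f : α → E) :
    (eLpNorm (c • f) p μ).toReal = |c| * (eLpNorm f p μ).toReal := by
  rw [eLpNorm_const_smul, ENNReal.toReal_mul, toReal_enorm, Real.norm_eq_abs]

lemma toReal_eLpNorm_sum_smul_le [NormedSpace ℝ E] [Fact (1 ≤ p)] {ι : Type*} (s : Finset ι)
    (c : ι → ℝ) {f : ι → α → E} (hf : ∀ i ∈ s, MemLp (f i) p μ) :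
    (eLpNorm (∑ i ∈ s, c i • f i) p μ).toReal ≤ ∑ i ∈ s, |c i| * (eLpNorm (f i) p μ).toReal := by
  have hcf : ∀ i ∈ s, MemLp (c i • f i) p μ := fun i hi => (hf i hi).const_smul (c i)
  calc (eLpNorm (∑ i ∈ s, c i • f i) p μ).toReal
      ≤ (∑ i ∈ s, eLpNorm (c i • f i) p μ).toReal :=
        ENNReal.toReal_mono (ENNReal.sum_ne_top.2 fun i hi => (hcf i hi).eLpNorm_ne_top)
          (eLpNorm_sum_le (fun i hi => (hcf i hi).1) Fact.out)
    _ = ∑ i ∈ s, |c i| * (eLpNorm (f i) p μ).toReal := by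
        rw [ENNReal.toReal_sum fun i hi => (hcf i hi).eLpNorm_ne_top]
        simp only [toReal_eLpNorm_const_smul]

lemma toReal_eLpNorm_le_of_forall_norm_le [IsProbabilityMeasure μ] {f : α → E} {C : ℝ}
    (hC : 0 ≤ C) (h : ∀ x, ‖f x‖ ≤ C) : (eLpNorm f p μ).toReal ≤ C :=
  ENNReal.toReal_le_of_le_ofReal hC <| by
    simpa using eLpNorm_le_of_ae_bound (μ := μ) (p := p) (Eventually.of_forall h)

end ToRealELpNorm

section LpInclusion

variable {α E : Type*} {m : MeasurableSpace α} {μ : Measure α} [IsProbabilityMeasure μ]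
  [NormedAddCommGroup E] [NormedSpace ℝ E] {p q : ℝ≥0∞} [Fact (1 ≤ p)] [Fact (1 ≤ q)]

noncomputable def lpInclusion (hpq : p ≤ q) : Lp E q μ →L[ℝ] Lp E p μ :=
  LinearMap.mkContinuous
    { toFun := fun f => ((Lp.memLp f).mono_exponent hpq).toLp f
      map_add' := fun f g => by
        rw [← MemLp.toLp_add]
        exact MemLp.toLp_congr _ _ (Lp.coeFn_add f g)
      map_smul' := fun c f => by
        rw [RingHom.id_apply, ← MemLp.toLp_const_smul]
        exact MemLp.toLp_congr _ _ (Lp.coeFn_smul c f) }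
    1 fun f => by
      rw [LinearMap.coe_mk, AddHom.coe_mk, Lp.norm_toLp, one_mul, Lp.norm_def]
      exact ENNReal.toReal_mono (Lp.eLpNorm_ne_top f)
        (eLpNorm_le_eLpNorm_of_exponent_le hpq (Lp.aestronglyMeasurable f))

lemma coeFn_lpInclusion (hpq : p ≤ q) (f : Lp E q μ) : lpInclusion hpq f =ᵐ[μ] f :=
  MemLp.coeFn_toLp ((Lp.memLp f).mono_exponent hpq)

end LpInclusion

lemma gronwallBound_mul_le {δ K c x T : ℝ} (hδ : 0 ≤ δ) (hK : 0 ≤ K) (hc : 0 ≤ c)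
    (hxT : x ≤ T) :
    gronwallBound δ K (K * c) x ≤ Real.exp (T * K) * δ + (Real.exp (T * K) - 1) * c := by
  rcases hK.eq_or_lt with rfl | hKpos
  · simp [gronwallBound_K0]
  have hexp : Real.exp (K * x) ≤ Real.exp (T * K) := Real.exp_le_exp.2 (by nlinarith)
  rw [gronwallBound_of_K_ne_0 hKpos.ne', mul_div_cancel_left₀ _ hKpos.ne']
  nlinarith [mul_le_mul_of_nonneg_left hexp hδ, mul_le_mul_of_nonneg_left hexp hc]

local notation "‖" x "‖₂" => ENNReal.toReal (eLpNorm x 2 μI)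

instance : IsProbabilityMeasure μI :=
  ⟨by simp [μI]⟩

structure IsGraphonKernel (W : ℝ → ℝ → ℝ) : Prop where
  measurable : Measurable (Function.uncurry W)
  abs_le_one : ∀ u v, |W u v| ≤ 1

section GraphonOp

variable {W Wa Wb : ℝ → ℝ → ℝ}

lemma graphonOp_congr_ae (W : ℝ → ℝ → ℝ) {x y : ℝ → ℝ} (h : x =ᵐ[μI] y) :
    graphonOp W x = graphonOp W y :=
  funext fun _ => integral_congr_ae (h.mono fun u hu => by simp only [hu])

lemma graphonOp_zero (W : ℝ → ℝ → ℝ) : graphonOp W 0 = 0 :=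
  funext fun _ => by simp [graphonOp]

lemma graphonOp_smul (W : ℝ → ℝ → ℝ) (c : ℝ) (x : ℝ → ℝ) :
    graphonOp W (c • x) = c • graphonOp W x :=
  funext fun _ => by
    simp only [graphonOp, Pi.smul_apply, smul_eq_mul, mul_left_comm, integral_const_mul]

lemma IsGraphonKernel.integrable_mul (hW : IsGraphonKernel W) {x : ℝ → ℝ}
    (hx : Integrable x μI) (v : ℝ) : Integrable (fun u => W u v * x u) μI :=
  hx.bdd_mul (hW.measurable.comp (measurable_id.prodMk measurable_const)).aestronglyMeasurable
    (Eventually.of_forall fun u => hW.abs_le_one u v)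

lemma graphonOp_sub (hW : IsGraphonKernel W) {x y : ℝ → ℝ} (hx : Integrable x μI)
    (hy : Integrable y μI) : graphonOp W (x - y) = graphonOp W x - graphonOp W y :=
  funext fun v => by
    simp only [graphonOp, Pi.sub_apply, mul_sub]
    exact integral_sub (hW.integrable_mul hx v) (hW.integrable_mul hy v)

lemma aestronglyMeasurable_graphonOp (hW : IsGraphonKernel W) {x : ℝ → ℝ}
    (hx : AEStronglyMeasurable x μI) : AEStronglyMeasurable (graphonOp W x) μI := by
  obtain ⟨y, hy, hxy⟩ := hx.aemeasurable
  rw [graphonOp_congr_ae W hxy]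
  exact (StronglyMeasurable.integral_prod_left
    (hW.measurable.mul (hy.comp measurable_fst)).stronglyMeasurable).aestronglyMeasurable

lemma abs_graphonOp_le (hW : IsGraphonKernel W) {x : ℝ → ℝ} (hx : MemLp x 2 μI) (v : ℝ) :
    |graphonOp W x v| ≤ ‖x‖₂ := by
  have h : ‖graphonOp W x v‖ₑ ≤ eLpNorm x 2 μI :=
    calc ‖graphonOp W x v‖ₑ ≤ ∫⁻ u, ‖W u v * x u‖ₑ ∂μI := enorm_integral_le_lintegral_enorm _
      _ = eLpNorm (fun u => W u v * x u) 1 μI := eLpNorm_one_eq_lintegral_enorm.symm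
      _ ≤ eLpNorm x 1 μI := eLpNorm_mono fun u => by
          rw [norm_mul]
          exact mul_le_of_le_one_left (norm_nonneg _) (hW.abs_le_one u v)
      _ ≤ eLpNorm x 2 μI := eLpNorm_le_eLpNorm_of_exponent_le one_le_two hx.1
  simpa [toReal_enorm] using ENNReal.toReal_mono hx.eLpNorm_ne_top h

lemma memLp_graphonOp (hW : IsGraphonKernel W) {x : ℝ → ℝ} (hx : MemLp x 2 μI) (p : ℝ≥0∞) :
    MemLp (graphonOp W x) p μI :=
  .of_bound (aestronglyMeasurable_graphonOp hW hx.1) _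
    (Eventually.of_forall (abs_graphonOp_le hW hx))

lemma toReal_eLpNorm_graphonOp_le (hW : IsGraphonKernel W) {x : ℝ → ℝ} (hx : MemLp x 2 μI) :
    ‖graphonOp W x‖₂ ≤ ‖x‖₂ :=
  toReal_eLpNorm_le_of_forall_norm_le ENNReal.toReal_nonneg (abs_graphonOp_le hW hx)

lemma le_graphonOpNormSub (hWa : IsGraphonKernel Wa) (hWb : IsGraphonKernel Wb) {x : ℝ → ℝ}
    (hx : MemLp x 2 μI) (hx1 : eLpNorm x 2 μI ≤ 1) :
    ‖graphonOp Wa x - graphonOp Wb x‖₂ ≤ graphonOpNormSub Wa Wb := by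
  refine le_ciSup (f := fun x : {x : ℝ → ℝ // MemLp x 2 μI ∧ eLpNorm x 2 μI ≤ 1} =>
    ‖graphonOp Wa x - graphonOp Wb x‖₂) ⟨2, ?_⟩ ⟨x, hx, hx1⟩
  rintro _ ⟨⟨y, hy, hy1⟩, rfl⟩
  have hy1' : ‖y‖₂ ≤ 1 := ENNReal.toReal_le_of_le_ofReal zero_le_one (by simpa using hy1)
  calc ‖graphonOp Wa y - graphonOp Wb y‖₂ ≤ ‖graphonOp Wa y‖₂ + ‖graphonOp Wb y‖₂ :=
        toReal_eLpNorm_sub_le (memLp_graphonOp hWa hy 2) (memLp_graphonOp hWb hy 2)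
    _ ≤ 1 + 1 := add_le_add ((toReal_eLpNorm_graphonOp_le hWa hy).trans hy1')
        ((toReal_eLpNorm_graphonOp_le hWb hy).trans hy1')
    _ = 2 := one_add_one_eq_two

lemma graphonOpNormSub_nonneg (hWa : IsGraphonKernel Wa) (hWb : IsGraphonKernel Wb) :
    0 ≤ graphonOpNormSub Wa Wb :=
  ENNReal.toReal_nonneg.trans (le_graphonOpNormSub hWa hWb (memLp_const 0) (by simp))

lemma toReal_eLpNorm_graphonOp_sub_graphonOp_le (hWa : IsGraphonKernel Wa)
    (hWb : IsGraphonKernel Wb) {x : ℝ → ℝ} (hx : MemLp x 2 μI) :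
    ‖graphonOp Wa x - graphonOp Wb x‖₂ ≤ graphonOpNormSub Wa Wb * ‖x‖₂ := by
  rcases (ENNReal.toReal_nonneg (a := eLpNorm x 2 μI)).eq_or_lt with h0 | hpos
  · have hx0 : x =ᵐ[μI] 0 := (eLpNorm_eq_zero_iff hx.1 two_ne_zero).1
      (((ENNReal.toReal_eq_zero_iff _).1 h0.symm).resolve_right hx.eLpNorm_ne_top)
    simp [graphonOp_congr_ae _ hx0, graphonOp_zero, ← h0]
  · set c := ‖x‖₂
    have hy : eLpNorm (c⁻¹ • x) 2 μI ≤ 1 := by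
      rw [← ENNReal.toReal_le_toReal (hx.const_smul _).eLpNorm_ne_top ENNReal.one_ne_top,
        toReal_eLpNorm_const_smul, abs_inv, abs_of_pos hpos, inv_mul_cancel₀ hpos.ne']
      simp
    calc ‖graphonOp Wa x - graphonOp Wb x‖₂
        = c * ‖graphonOp Wa (c⁻¹ • x) - graphonOp Wb (c⁻¹ • x)‖₂ := by
          rw [graphonOp_smul, graphonOp_smul, ← smul_sub, toReal_eLpNorm_const_smul, abs_inv,
            abs_of_pos hpos, mul_inv_cancel_left₀ hpos.ne']
      _ ≤ c * graphonOpNormSub Wa Wb :=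
          mul_le_mul_of_nonneg_left (le_graphonOpNormSub hWa hWb (hx.const_smul _) hy) hpos.le
      _ = graphonOpNormSub Wa Wb * c := mul_comm _ _

end GraphonOp

section GraphonIter

variable {W Wa Wb : ℝ → ℝ → ℝ}

lemma graphonIter_succ (W : ℝ → ℝ → ℝ) (k : ℕ) (x : ℝ → ℝ) :
    graphonIter W (k + 1) x = graphonOp W (graphonIter W k x) :=
  Function.iterate_succ_apply' _ _ _

lemma graphonIter_zero_right (W : ℝ → ℝ → ℝ) (k : ℕ) : graphonIter W k 0 = 0 :=
  Function.iterate_fixed (graphonOp_zero W) k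

lemma memLp_graphonIter (hW : IsGraphonKernel W) {x : ℝ → ℝ} (hx : MemLp x 2 μI) :
    ∀ k, MemLp (graphonIter W k x) 2 μI
  | 0 => hx
  | k + 1 => by
    rw [graphonIter_succ]
    exact memLp_graphonOp hW (memLp_graphonIter hW hx k) 2

lemma toReal_eLpNorm_graphonIter_le (hW : IsGraphonKernel W) {x : ℝ → ℝ} (hx : MemLp x 2 μI) :
    ∀ k, ‖graphonIter W k x‖₂ ≤ ‖x‖₂
  | 0 => le_rfl
  | k + 1 => by
    rw [graphonIter_succ]
    exact (toReal_eLpNorm_graphonOp_le hW (memLp_graphonIter hW hx k)).trans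
      (toReal_eLpNorm_graphonIter_le hW hx k)

lemma toReal_eLpNorm_graphonIter_sub_le (hWa : IsGraphonKernel Wa) (hWb : IsGraphonKernel Wb)
    {x y : ℝ → ℝ} (hx : MemLp x 2 μI) (hy : MemLp y 2 μI) : ∀ k : ℕ,
    ‖graphonIter Wa k x - graphonIter Wb k y‖₂
      ≤ ‖x - y‖₂ + k * graphonOpNormSub Wa Wb * ‖y‖₂
  | 0 => by simp [graphonIter]
  | k + 1 => by
    set N := graphonOpNormSub Wa Wb
    set z := graphonIter Wb k y
    set d := graphonIter Wa k x - z
    have hz : MemLp z 2 μI := memLp_graphonIter hWb hy k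
    have hd : MemLp d 2 μI := (memLp_graphonIter hWa hx k).sub hz
    have hsplit : graphonIter Wa (k + 1) x - graphonIter Wb (k + 1) y
        = graphonOp Wa d + (graphonOp Wa z - graphonOp Wb z) := by
      rw [graphonIter_succ, graphonIter_succ,
        graphonOp_sub hWa ((memLp_graphonIter hWa hx k).integrable one_le_two)
          (hz.integrable one_le_two)]
      abel
    calc ‖graphonIter Wa (k + 1) x - graphonIter Wb (k + 1) y‖₂
        ≤ ‖graphonOp Wa d‖₂ + ‖graphonOp Wa z - graphonOp Wb z‖₂ := by
          rw [hsplit]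
          exact toReal_eLpNorm_add_le (memLp_graphonOp hWa hd 2)
            ((memLp_graphonOp hWa hz 2).sub (memLp_graphonOp hWb hz 2))
      _ ≤ (‖x - y‖₂ + k * N * ‖y‖₂) + N * ‖y‖₂ := by
          gcongr
          · exact (toReal_eLpNorm_graphonOp_le hWa hd).trans
              (toReal_eLpNorm_graphonIter_sub_le hWa hWb hx hy k)
          · exact (toReal_eLpNorm_graphonOp_sub_graphonOp_le hWa hWb hz).trans
              (mul_le_mul_of_nonneg_left (toReal_eLpNorm_graphonIter_le hWb hy k)
                (graphonOpNormSub_nonneg hWa hWb))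
      _ = ‖x - y‖₂ + ↑(k + 1) * N * ‖y‖₂ := by push_cast; ring

end GraphonIter

lemma NormalizedLipschitz.lipschitzWith {ρ : ℝ → ℝ} (hρ : NormalizedLipschitz ρ) :
    LipschitzWith 1 ρ :=
  LipschitzWith.of_dist_le_mul fun x y => by simpa [Real.dist_eq] using hρ.1 x y

section VecLpNorm

variable {F : ℕ}

lemma vecLpNorm_congr_ae {X Y : Fin F → ℝ → ℝ} (h : ∀ f, X f =ᵐ[μI] Y f) :
    vecLpNorm F 2 X = vecLpNorm F 2 Y := by
  simp only [vecLpNorm, eLpNorm_congr_ae (h _)]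

lemma vecLpNorm_nonneg (X : Fin F → ℝ → ℝ) : 0 ≤ vecLpNorm F 2 X :=
  Real.sqrt_nonneg _

lemma vecLpNorm_zero : vecLpNorm F 2 0 = 0 := by
  simp [vecLpNorm]

lemma vecLpNorm_le_sqrt_mul {X : Fin F → ℝ → ℝ} {M : ℝ} (hM : 0 ≤ M) (h : ∀ f, ‖X f‖₂ ≤ M) :
    vecLpNorm F 2 X ≤ √F * M := by
  calc vecLpNorm F 2 X ≤ √(∑ _f : Fin F, M ^ 2) :=
        Real.sqrt_le_sqrt (Finset.sum_le_sum fun f _ => by gcongr; exact h f)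
    _ = √F * M := by simp [Real.sqrt_mul, Real.sqrt_sq hM]

lemma sum_le_sqrt_mul_vecLpNorm (X : Fin F → ℝ → ℝ) : ∑ f, ‖X f‖₂ ≤ √F * vecLpNorm F 2 X := by
  have h := sq_sum_le_card_mul_sum_sq (s := Finset.univ) (f := fun f => ‖X f‖₂)
  rw [Finset.card_univ, Fintype.card_fin] at h
  exact (le_abs_self _).trans <|
    (Real.abs_le_sqrt h).trans_eq (Real.sqrt_mul (Nat.cast_nonneg F) _)

end VecLpNorm

section GnnLayer

variable {F K : ℕ} {W Wa Wb : ℝ → ℝ → ℝ} {ρ : ℝ → ℝ} {m : Fin F → Fin F → Fin K → ℝ} {c : ℝ}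

lemma memLp_gnnLayer (hW : IsGraphonKernel W) (hρ : NormalizedLipschitz ρ)
    (m : Fin F → Fin F → Fin K → ℝ) {X : Fin F → ℝ → ℝ} (hX : ∀ g, MemLp (X g) 2 μI)
    (f : Fin F) : MemLp (gnnLayer F K W ρ m X f) 2 μI :=
  hρ.lipschitzWith.comp_memLp hρ.2 <| memLp_finsetSum _ fun g _ =>
    memLp_finsetSum _ fun k _ => (memLp_graphonIter hW (hX g) k).const_mul _

lemma gnnLayer_zero (hρ : NormalizedLipschitz ρ) (W : ℝ → ℝ → ℝ)
    (m : Fin F → Fin F → Fin K → ℝ) : gnnLayer F K W ρ m 0 = 0 := by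
  funext f u
  simp [gnnLayer, graphonIter_zero_right, hρ.2]

lemma toReal_eLpNorm_gnnLayer_sub_le (hWa : IsGraphonKernel Wa) (hWb : IsGraphonKernel Wb)
    (hρ : NormalizedLipschitz ρ) (hm : ∀ f g k, |m f g k| ≤ c) {X Y : Fin F → ℝ → ℝ}
    (hX : ∀ g, MemLp (X g) 2 μI) (hY : ∀ g, MemLp (Y g) 2 μI) (f : Fin F) :
    ‖gnnLayer F K Wa ρ m X f - gnnLayer F K Wb ρ m Y f‖₂
      ≤ c * ∑ g, ∑ k : Fin K, ‖graphonIter Wa k (X g) - graphonIter Wb k (Y g)‖₂ := by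
  set D : Fin F × Fin K → ℝ → ℝ := fun i => graphonIter Wa i.2 (X i.1) - graphonIter Wb i.2 (Y i.1)
  have hD : ∀ i ∈ Finset.univ, MemLp (D i) 2 μI := fun i _ =>
    (memLp_graphonIter hWa (hX i.1) _).sub (memLp_graphonIter hWb (hY i.1) _)
  have hpre : ∀ u, ‖gnnLayer F K Wa ρ m X f u - gnnLayer F K Wb ρ m Y f u‖
      ≤ ‖(∑ i, m f i.1 i.2 • D i) u‖ := fun u => by
    simp only [Real.norm_eq_abs]
    refine (hρ.1 _ _).trans_eq ?_
    simp [D, Finset.sum_apply, mul_sub, Finset.sum_sub_distrib, Fintype.sum_prod_type]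
  calc ‖gnnLayer F K Wa ρ m X f - gnnLayer F K Wb ρ m Y f‖₂
      ≤ ‖∑ i, m f i.1 i.2 • D i‖₂ :=
        ENNReal.toReal_mono (memLp_finsetSum' _ fun i hi => (hD i hi).const_smul _).eLpNorm_ne_top
          (eLpNorm_mono hpre)
    _ ≤ ∑ i, |m f i.1 i.2| * ‖D i‖₂ := toReal_eLpNorm_sum_smul_le _ _ hD
    _ ≤ ∑ i, c * ‖D i‖₂ := Finset.sum_le_sum fun i _ =>
        mul_le_mul_of_nonneg_right (hm _ _ _) ENNReal.toReal_nonneg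
    _ = c * ∑ g, ∑ k : Fin K, ‖graphonIter Wa k (X g) - graphonIter Wb k (Y g)‖₂ := by
        rw [← Finset.mul_sum, Fintype.sum_prod_type]

lemma vecLpNorm_gnnLayer_sub_le (hWa : IsGraphonKernel Wa) (hWb : IsGraphonKernel Wb)
    (hρ : NormalizedLipschitz ρ) (hc : 0 ≤ c) (hm : ∀ f g k, |m f g k| ≤ c)
    {X Y : Fin F → ℝ → ℝ} (hX : ∀ g, MemLp (X g) 2 μI) (hY : ∀ g, MemLp (Y g) 2 μI) :
    vecLpNorm F 2 (gnnLayer F K Wa ρ m X - gnnLayer F K Wb ρ m Y)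
      ≤ F * K * c * (vecLpNorm F 2 (X - Y) + K * graphonOpNormSub Wa Wb * vecLpNorm F 2 Y) := by
  set N := graphonOpNormSub Wa Wb
  have hN : 0 ≤ N := graphonOpNormSub_nonneg hWa hWb
  set B := vecLpNorm F 2 (X - Y) + K * N * vecLpNorm F 2 Y
  have hB : 0 ≤ B := add_nonneg (vecLpNorm_nonneg _) (by have := vecLpNorm_nonneg Y; positivity)
  have hcomp : ∀ f, ‖(gnnLayer F K Wa ρ m X - gnnLayer F K Wb ρ m Y) f‖₂ ≤ c * K * √F * B :=
    fun f => calc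
      ‖gnnLayer F K Wa ρ m X f - gnnLayer F K Wb ρ m Y f‖₂
        ≤ c * ∑ g, ∑ _k : Fin K, (‖X g - Y g‖₂ + K * N * ‖Y g‖₂) := by
          refine (toReal_eLpNorm_gnnLayer_sub_le hWa hWb hρ hm hX hY f).trans ?_
          gcongr with g _ k _
          refine (toReal_eLpNorm_graphonIter_sub_le hWa hWb (hX g) (hY g) k).trans ?_
          gcongr
          exact k.2.le
      _ = c * K * (∑ g, ‖(X - Y) g‖₂ + K * N * ∑ g, ‖Y g‖₂) := by
          simp only [Finset.sum_const, Finset.card_univ, Fintype.card_fin, nsmul_eq_mul,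
            Finset.mul_sum, ← Finset.sum_add_distrib, Pi.sub_apply]
          exact Finset.sum_congr rfl fun g _ => by ring
      _ ≤ c * K * (√F * vecLpNorm F 2 (X - Y) + K * N * (√F * vecLpNorm F 2 Y)) := by
          gcongr <;> exact sum_le_sqrt_mul_vecLpNorm _
      _ = c * K * √F * B := by ring
  refine (vecLpNorm_le_sqrt_mul (by positivity) hcomp).trans_eq ?_
  linear_combination (c * K * B) * Real.mul_self_sqrt (Nat.cast_nonneg (α := ℝ) F)

lemma vecLpNorm_gnnLayer_le (hW : IsGraphonKernel W) (hρ : NormalizedLipschitz ρ) (hc : 0 ≤ c)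
    (hm : ∀ f g k, |m f g k| ≤ c) {X : Fin F → ℝ → ℝ} (hX : ∀ g, MemLp (X g) 2 μI) :
    vecLpNorm F 2 (gnnLayer F K W ρ m X) ≤ F * K * c * vecLpNorm F 2 X := by
  simpa [gnnLayer_zero hρ, vecLpNorm_zero] using
    vecLpNorm_gnnLayer_sub_le hW hW hρ hc hm hX (Y := 0) fun _ => MemLp.zero

end GnnLayer

section Gnn

variable {F K L : ℕ} {Wa Wb : ℝ → ℝ → ℝ} {ρ : ℝ → ℝ} {c : ℝ}

lemma vecLpNorm_foldl_gnnLayer_sub_le (hWa : IsGraphonKernel Wa) (hWb : IsGraphonKernel Wb)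
    (hρ : NormalizedLipschitz ρ) (hc : 0 ≤ c) :
    ∀ (hs : List (Fin F → Fin F → Fin K → ℝ)), (∀ m ∈ hs, ∀ f g k, |m f g k| ≤ c) →
    ∀ {X Y : Fin F → ℝ → ℝ}, (∀ g, MemLp (X g) 2 μI) → (∀ g, MemLp (Y g) 2 μI) →
    vecLpNorm F 2 (hs.foldl (fun Z m => gnnLayer F K Wa ρ m Z) X
        - hs.foldl (fun Z m => gnnLayer F K Wb ρ m Z) Y)
      ≤ (F * K * c) ^ hs.length
        * (vecLpNorm F 2 (X - Y) + hs.length * K * graphonOpNormSub Wa Wb * vecLpNorm F 2 Y)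
  | [], _, _, _, _, _ => by simp
  | m :: hs, hbd, X, Y, hX, hY => by
    have hm := hbd m List.mem_cons_self
    have ih := vecLpNorm_foldl_gnnLayer_sub_le hWa hWb hρ hc hs
      (fun m' hm' => hbd m' (List.mem_cons_of_mem _ hm'))
      (memLp_gnnLayer hWa hρ m hX) (memLp_gnnLayer hWb hρ m hY)
    have hN := graphonOpNormSub_nonneg hWa hWb
    have hY0 := vecLpNorm_nonneg Y
    simp only [List.foldl_cons, List.length_cons]
    refine ih.trans ?_
    calc ((F : ℝ) * K * c) ^ hs.length
          * (vecLpNorm F 2 (gnnLayer F K Wa ρ m X - gnnLayer F K Wb ρ m Y)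
            + hs.length * K * graphonOpNormSub Wa Wb * vecLpNorm F 2 (gnnLayer F K Wb ρ m Y))
        ≤ (F * K * c) ^ hs.length
          * (F * K * c * (vecLpNorm F 2 (X - Y) + K * graphonOpNormSub Wa Wb * vecLpNorm F 2 Y)
            + hs.length * K * graphonOpNormSub Wa Wb * (F * K * c * vecLpNorm F 2 Y)) := by
          gcongr
          · exact vecLpNorm_gnnLayer_sub_le hWa hWb hρ hc hm hX hY
          · exact vecLpNorm_gnnLayer_le hWb hρ hc hm hY
      _ = _ := by push_cast; ring

lemma vecLpNorm_gnn_sub_le (hWa : IsGraphonKernel Wa) (hWb : IsGraphonKernel Wb)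
    (hρ : NormalizedLipschitz ρ) (hc : 0 ≤ c) {h : Fin L → Fin F → Fin F → Fin K → ℝ}
    (hh : ∀ ℓ f g k, |h ℓ f g k| ≤ c) {X Y : Fin F → ℝ → ℝ} (hX : ∀ g, MemLp (X g) 2 μI)
    (hY : ∀ g, MemLp (Y g) 2 μI) :
    vecLpNorm F 2 (gnn F K L Wa ρ h X - gnn F K L Wb ρ h Y)
      ≤ (F * K * c) ^ L
        * (vecLpNorm F 2 (X - Y) + L * K * graphonOpNormSub Wa Wb * vecLpNorm F 2 Y) := by
  simpa [gnn] using vecLpNorm_foldl_gnnLayer_sub_le hWa hWb hρ hc (List.ofFn h)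
    (by simpa [List.mem_ofFn] using hh) hX hY

end Gnn

/-- Solutions are differentiable in `L^∞(I)^F`; Grönwall's inequality is applied to their image
in the Hilbert sum `L²(I)^F`, whose norm is `vecLpNorm F 2`. -/
noncomputable def toL2Pi (F : ℕ) : (Fin F → Lp ℝ ⊤ μI) →L[ℝ] PiLp 2 (fun _ : Fin F => Lp ℝ 2 μI) :=
  (PiLp.continuousLinearEquiv 2 ℝ _).symm.toContinuousLinearMap.comp
    (ContinuousLinearMap.pi fun f => (lpInclusion le_top).comp (ContinuousLinearMap.proj f))

lemma norm_toL2Pi {F : ℕ} (v : Fin F → Lp ℝ ⊤ μI) :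
    ‖toL2Pi F v‖ = vecLpNorm F 2 fun f => v f := by
  rw [PiLp.norm_eq_of_L2]
  simp [toL2Pi, Lp.norm_def, vecLpNorm, eLpNorm_congr_ae (coeFn_lpInclusion le_top _)]

lemma norm_toL2Pi_sub {F : ℕ} (v w : Fin F → Lp ℝ ⊤ μI) :
    ‖toL2Pi F (v - w)‖ = vecLpNorm F 2 fun f => ⇑(v f) - ⇑(w f) :=
  (norm_toL2Pi _).trans (vecLpNorm_congr_ae fun f => Lp.coeFn_sub (v f) (w f))

section Solution

variable {F K L : ℕ} {T : ℝ} {W Wn : ℝ → ℝ → ℝ} {ρ : ℝ → ℝ}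
  {H : ℝ → Fin L → Fin F → Fin F → Fin K → ℝ} {Z Zn : Fin F → ℝ → ℝ}
  {X Xn : ℝ → Fin F → Lp ℝ ⊤ μI}

lemma IsGNDESolution.bddAbove_vecLpNorm (hX : IsGNDESolution F K L T W ρ H Z X) :
    BddAbove (range fun t : Icc (0 : ℝ) T => vecLpNorm F 2 fun f => (X t f : ℝ → ℝ)) := by
  obtain ⟨-, X', -, hX'⟩ := hX
  have hcont : ContinuousOn (fun t => ‖toL2Pi F (X t)‖) (Icc 0 T) :=
    (continuous_norm.comp (toL2Pi F).continuous).comp_continuousOn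
      fun t ht => (hX' t ht).1.continuousWithinAt
  simpa only [image_eq_range, norm_toL2Pi] using
    (isCompact_Icc.image_of_continuousOn hcont).bddAbove

lemma IsGNDESolution.vecLpNorm_sub_le_gronwallBound (hρ : NormalizedLipschitz ρ)
    (hW : IsGraphonKernel W) (hWn : IsGraphonKernel Wn) {c S : ℝ} (hc : 0 ≤ c)
    (hH : ∀ t ∈ Icc 0 T, ∀ ℓ f g k, |H t ℓ f g k| ≤ c)
    (hS : ∀ t ∈ Icc 0 T, vecLpNorm F 2 (fun f => (X t f : ℝ → ℝ)) ≤ S)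
    (hX : IsGNDESolution F K L T W ρ H Z X) (hXn : IsGNDESolution F K L T Wn ρ H Zn Xn) :
    ∀ t ∈ Icc 0 T, vecLpNorm F 2 (fun f u => (Xn t f : ℝ → ℝ) u - (X t f : ℝ → ℝ) u)
      ≤ gronwallBound (vecLpNorm F 2 (fun f u => Zn f u - Z f u)) ((F * K * c) ^ L)
          ((F * K * c) ^ L * (L * K * graphonOpNormSub Wn W * S)) t := by
  obtain ⟨hX0, X', -, hX'⟩ := hX
  obtain ⟨hXn0, Xn', -, hXn'⟩ := hXn
  have hderiv : ∀ t ∈ Icc 0 T, HasDerivWithinAt (fun t => toL2Pi F (Xn t - X t))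
      (toL2Pi F (Xn' t - X' t)) (Icc 0 T) t := fun t ht =>
    (toL2Pi F).hasFDerivAt.comp_hasDerivWithinAt t ((hXn' t ht).1.sub (hX' t ht).1)
  have hinit : ‖toL2Pi F (Xn 0 - X 0)‖ ≤ vecLpNorm F 2 (fun f u => Zn f u - Z f u) := by
    refine (norm_toL2Pi_sub _ _).trans_le (vecLpNorm_congr_ae fun f => ?_).le
    filter_upwards [hXn0 f, hX0 f] with u h1 h2
    simp [h1, h2]
  have hbound : ∀ t ∈ Ico 0 T, ‖toL2Pi F (Xn' t - X' t)‖
      ≤ (F * K * c) ^ L * ‖toL2Pi F (Xn t - X t)‖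
        + (F * K * c) ^ L * (L * K * graphonOpNormSub Wn W * S) := by
    intro t ht
    have ht' : t ∈ Icc 0 T := Ico_subset_Icc_self ht
    have hN := graphonOpNormSub_nonneg hWn hW
    rw [norm_toL2Pi_sub, norm_toL2Pi_sub,
      vecLpNorm_congr_ae fun f => ((hXn' t ht').2 f).sub ((hX' t ht').2 f)]
    refine (vecLpNorm_gnn_sub_le hWn hW hρ hc (hH t ht')
      (fun g => (Lp.memLp _).mono_exponent le_top)
      (fun g => (Lp.memLp _).mono_exponent le_top)).trans ?_
    rw [mul_add]
    gcongr
    exacts [le_rfl, hS t ht']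
  intro t ht
  have := norm_le_gronwallBound_of_norm_deriv_right_le
    (fun t ht => (hderiv t ht).continuousWithinAt)
    (fun t ht => (hderiv t (Ico_subset_Icc_self ht)).mono_of_mem_nhdsWithin
      (Icc_mem_nhdsGE_of_mem ht)) hinit hbound t ht
  rwa [sub_zero, norm_toL2Pi_sub] at this

end Solution

theorem graphonNDE_stability_general
    (F K L : ℕ) (hF : 1 ≤ F) (hK : 1 ≤ K) (hL : 1 ≤ L)
    (ρ : ℝ → ℝ) (hρ : NormalizedLipschitz ρ)
    (T : ℝ) (hT : 0 < T)
    (H : ℝ → Fin L → Fin F → Fin F → Fin K → ℝ)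
    (hTbd : ℝ) (hhT : ∀ t ∈ Set.Icc (0:ℝ) T, ∀ ℓ f g k, |H t ℓ f g k| ≤ hTbd)
    (W : ℝ → ℝ → ℝ) (hWm : Measurable (Function.uncurry W))
    (hWb : ∀ u v, |W u v| ≤ 1)
    (Wn : ℝ → ℝ → ℝ) (hWnm : Measurable (Function.uncurry Wn))
    (hWnb : ∀ u v, |Wn u v| ≤ 1)
    (Z : Fin F → ℝ → ℝ)
    (Zn : Fin F → ℝ → ℝ)
    (X : ℝ → Fin F → Lp ℝ ⊤ μI) (hX : IsGNDESolution F K L T W ρ H Z X)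
    (Xn : ℝ → Fin F → Lp ℝ ⊤ μI) (hXn : IsGNDESolution F K L T Wn ρ H Zn Xn) :
    (⨆ t : Set.Icc (0:ℝ) T,
        vecLpNorm F 2 (fun f u => (Xn (t : ℝ) f : ℝ → ℝ) u - (X (t : ℝ) f : ℝ → ℝ) u))
      ≤ Real.exp (T * ((F : ℝ) * K * hTbd) ^ L)
          * vecLpNorm F 2 (fun f u => Zn f u - Z f u)
        + (Real.exp (T * ((F : ℝ) * K * hTbd) ^ L) - 1) * L * K
          * (⨆ t : Set.Icc (0:ℝ) T, vecLpNorm F 2 (fun f => (X (t : ℝ) f : ℝ → ℝ)))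
          * graphonOpNormSub Wn W := by
  have h0T : (0 : ℝ) ∈ Icc 0 T := ⟨le_rfl, hT.le⟩
  have hc : 0 ≤ hTbd := (abs_nonneg _).trans (hhT 0 h0T ⟨0, hL⟩ ⟨0, hF⟩ ⟨0, hF⟩ ⟨0, hK⟩)
  have hN : 0 ≤ graphonOpNormSub Wn W := graphonOpNormSub_nonneg ⟨hWnm, hWnb⟩ ⟨hWm, hWb⟩
  have hS : ∀ t ∈ Icc 0 T, vecLpNorm F 2 (fun f => (X t f : ℝ → ℝ))
      ≤ ⨆ t : Icc (0 : ℝ) T, vecLpNorm F 2 (fun f => (X t f : ℝ → ℝ)) :=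
    fun t ht => le_ciSup hX.bddAbove_vecLpNorm ⟨t, ht⟩
  have hS0 := (vecLpNorm_nonneg _).trans (hS 0 h0T)
  have hgron := hX.vecLpNorm_sub_le_gronwallBound hρ ⟨hWm, hWb⟩ ⟨hWnm, hWnb⟩ hc hhT hS hXn
  have : Nonempty (Icc (0 : ℝ) T) := ⟨⟨0, h0T⟩⟩
  refine ciSup_le fun t => (hgron t t.2).trans ?_
  exact (gronwallBound_mul_le (vecLpNorm_nonneg _) (by positivity) (by positivity) t.2.2).trans_eq
    (by ring)

/-- **Stability of Graphon-NDEs.**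
With filter bound `hTbd` on `[0,T]`, the solutions of two Graphon-NDEs with data `(W,Z)` and
`(Wₙ,Zₙ)` satisfy
`sup_{t∈[0,T]} ‖Xₙ(t) − X(t)‖_{L²} ≤ P ‖Zₙ − Z‖_{L²} + Q ‖T_{Wₙ} − T_W‖_{L²→L²}`, where
`P = exp(T (F K h_T)^L)` and `Q = (P − 1) L K sup_{t∈[0,T]} ‖X(t)‖_{L²}`. -/
theorem graphonNDE_stability
    (F K L : ℕ) (hF : 1 ≤ F) (hK : 1 ≤ K) (hL : 1 ≤ L)
    (ρ : ℝ → ℝ) (hρ : NormalizedLipschitz ρ)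
    (T : ℝ) (hT : 0 < T)
    (H : ℝ → Fin L → Fin F → Fin F → Fin K → ℝ)
    (hH : ∀ ℓ f g k, ContinuousOn (fun t => H t ℓ f g k) (Set.Icc 0 T))
    (hTbd : ℝ) (hhT : ∀ t ∈ Set.Icc (0:ℝ) T, ∀ ℓ f g k, |H t ℓ f g k| ≤ hTbd)
    (W : ℝ → ℝ → ℝ) (hWm : Measurable (Function.uncurry W))
    (hWb : ∀ u v, |W u v| ≤ 1)
    (Wn : ℝ → ℝ → ℝ) (hWnm : Measurable (Function.uncurry Wn))
    (hWnb : ∀ u v, |Wn u v| ≤ 1)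
    (Z : Fin F → ℝ → ℝ) (hZ : ∀ f, MemLp (Z f) ⊤ μI)
    (Zn : Fin F → ℝ → ℝ) (hZn : ∀ f, MemLp (Zn f) ⊤ μI)
    (X : ℝ → Fin F → Lp ℝ ⊤ μI) (hX : IsGNDESolution F K L T W ρ H Z X)
    (Xn : ℝ → Fin F → Lp ℝ ⊤ μI) (hXn : IsGNDESolution F K L T Wn ρ H Zn Xn) :
    (⨆ t : Set.Icc (0:ℝ) T,
        vecLpNorm F 2 (fun f u => (Xn (t : ℝ) f : ℝ → ℝ) u - (X (t : ℝ) f : ℝ → ℝ) u))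
      ≤ Real.exp (T * ((F : ℝ) * K * hTbd) ^ L)
          * vecLpNorm F 2 (fun f u => Zn f u - Z f u)
        + (Real.exp (T * ((F : ℝ) * K * hTbd) ^ L) - 1) * L * K
          * (⨆ t : Set.Icc (0:ℝ) T, vecLpNorm F 2 (fun f => (X (t : ℝ) f : ℝ → ℝ)))
          * graphonOpNormSub Wn W :=
  graphonNDE_stability_general F K L hF hK hL ρ hρ T hT H hTbd hhT W hWm hWb Wn hWnm hWnb Z Zn X hX
    Xn hXn
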